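/- Suppose that P is totally ramified in E and unramified in F'. Then [E F' : F'] = [E : F]; equivalently, E/F and F'/F are linearly disjoint. -/

import Mathlib

/-!
Let `Q` be a place of `E F'` above `P`. Ramification indices are multiplicative in towers, so
`e(Q | P)` is a multiple of `e(Q ∩ E | P) = [E : F]`, while
`e(Q | P) = e(Q ∩ F' | P) · e(Q | Q ∩ F') = e(Q | Q ∩ F') ≤ [E F' : F']`.
Hence `[E : F] ≤ [E F' : F']`; the reverse inequality holds for every compositum.
-/

open Module IsLocalRing

namespace Ideal

theorem ramificationIdx_le_finrank_of_flat {R S : Type*} [CommRing R] [IsDomain R] [CommRing S]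
    [Algebra R S] [Module.Finite R S] [Module.Flat R S] (q : Ideal S) [q.IsPrime] :
    q.ramificationIdx R ≤ finrank R S := by
  have : Fintype ((q.under R).primesOver S) := (Algebra.QuasiFinite.finite_primesOver _).fintype
  rw [← sum_ramification_inertia_eq_finrank (q.under R) S]
  calc q.ramificationIdx R ≤ q.ramificationIdx R * q.inertiaDeg R :=
        Nat.le_mul_of_pos_right _ (q.inertiaDeg_pos R)
    _ ≤ _ := Finset.single_le_sum (f := fun q : (q.under R).primesOver S =>
        q.1.ramificationIdx R * q.1.inertiaDeg R) (fun _ _ => Nat.zero_le _)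
        (Finset.mem_univ ⟨q, inferInstance, ⟨rfl⟩⟩)

theorem ramificationIdx_under_le_mul_finrank {R S₁ S₂ T : Type*} [CommRing R] [CommRing S₁]
    [CommRing S₂] [IsDomain S₂] [CommRing T] [Algebra R S₁] [Algebra R S₂] [Algebra R T]
    [Algebra S₁ T] [Algebra S₂ T] [IsScalarTower R S₁ T] [IsScalarTower R S₂ T]
    [Module.Finite R T] [Module.Flat S₁ T] [Module.Finite S₂ T] [Module.Flat S₂ T]
    (Q : Ideal T) [Q.IsPrime] :
    (Q.under S₁).ramificationIdx R ≤ (Q.under S₂).ramificationIdx R * finrank S₂ T :=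
  calc (Q.under S₁).ramificationIdx R ≤ Q.ramificationIdx R := ramificationIdx_below_le _ Q
    _ = (Q.under S₂).ramificationIdx R * Q.ramificationIdx S₂ := ramificationIdx_tower _ Q
    _ ≤ _ := Nat.mul_le_mul_left _ (ramificationIdx_le_finrank_of_flat Q)

theorem ramificationIdx'_maximalIdeal_eq_ramificationIdx {O S : Type*} [CommRing O] [IsDomain O]
    [IsDiscreteValuationRing O] [CommRing S] [IsDedekindDomain S] [Algebra O S]
    [Module.IsTorsionFree O S] [Algebra.IsIntegral O S] (Q : Ideal S) [Q.IsMaximal] :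
    (maximalIdeal O).ramificationIdx' Q = Q.ramificationIdx O := by
  have : Q.LiesOver (maximalIdeal O) := ⟨(eq_maximalIdeal (IsMaximal.under O Q)).symm⟩
  exact ramificationIdx'_eq_ramificationIdx _ _ (IsDiscreteValuationRing.not_a_field O)

end Ideal

namespace integralClosure

variable (A E K : Type*) [CommRing A] [Field E] [Field K]
  [Algebra A E] [Algebra A K] [Algebra E K] [IsScalarTower A E K]

abbrev algebraOfTower : Algebra (integralClosure A E) (integralClosure A K) :=
  (IsScalarTower.toAlgHom A E K).mapIntegralClosure.toAlgebra

attribute [local instance] algebraOfTower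

theorem isScalarTower_of_tower :
    IsScalarTower A (integralClosure A E) (integralClosure A K) :=
  .of_algHom _

theorem isScalarTower_field_of_tower :
    IsScalarTower (integralClosure A E) (integralClosure A K) K :=
  .of_algebraMap_eq fun _ => rfl

theorem isTorsionFree_of_tower :
    Module.IsTorsionFree (integralClosure A E) (integralClosure A K) :=
  Module.isTorsionFree_iff_algebraMap_injective.mpr fun _ _ h =>
    Subtype.ext ((algebraMap E K).injective (congrArg Subtype.val h))

end integralClosure

section Compositum

attribute [local instance] integralClosure.algebraOfTower integralClosure.isScalarTower_of_tower
  integralClosure.isScalarTower_field_of_tower integralClosure.isTorsionFree_of_tower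

variable (O F : Type*) {E F' K : Type*} [CommRing O] [IsDomain O] [IsDiscreteValuationRing O]
  [Field F] [Field E] [Field F'] [Field K] [Algebra O F] [IsFractionRing O F]
  [Algebra F E] [Algebra F F'] [Algebra F K] [Algebra E K] [Algebra F' K]
  [IsScalarTower F E K] [IsScalarTower F F' K]
  [Algebra O E] [Algebra O F'] [Algebra O K]
  [IsScalarTower O F E] [IsScalarTower O F F'] [IsScalarTower O F K]
  [FiniteDimensional F E] [Algebra.IsSeparable F E]
  [FiniteDimensional F F'] [Algebra.IsSeparable F F']
  [FiniteDimensional F K] [Algebra.IsSeparable F K]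

theorem finrank_le_finrank_of_totally_ramified_of_unramified
    (htot : ∀ Q : Ideal (integralClosure O E), Q.IsMaximal →
      (maximalIdeal O).ramificationIdx' Q = finrank F E)
    (hunr : ∀ Q : Ideal (integralClosure O F'), Q.IsMaximal →
      (maximalIdeal O).ramificationIdx' Q = 1) :
    finrank F E ≤ finrank F' K := by
  have := IsScalarTower.to₁₃₄ O F E K
  have := IsScalarTower.to₁₃₄ O F F' K
  have : Module.IsTorsionFree O E := .trans_faithfulSMul O F E
  have : Module.IsTorsionFree O F' := .trans_faithfulSMul O F F'
  have := integralClosure.isDedekindDomain O F E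
  have := integralClosure.isDedekindDomain O F F'
  have := integralClosure.isFractionRing_of_finite_extension (A := O) F F'
  have := integralClosure.isFractionRing_of_finite_extension (A := O) F K
  have : Module.Finite O (integralClosure O K) := IsIntegralClosure.finite O F K _
  have : Module.Finite (integralClosure O E) (integralClosure O K) :=
    .of_restrictScalars_finite O _ _
  have : Module.Finite (integralClosure O F') (integralClosure O K) :=
    .of_restrictScalars_finite O _ _
  obtain ⟨Q, _⟩ := Ideal.exists_maximal (integralClosure O K)
  have key := Ideal.ramificationIdx_under_le_mul_finrank (R := O) (S₁ := integralClosure O E)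
    (S₂ := integralClosure O F') Q
  rwa [← Ideal.ramificationIdx'_maximalIdeal_eq_ramificationIdx,
    ← Ideal.ramificationIdx'_maximalIdeal_eq_ramificationIdx, htot _ inferInstance,
    hunr _ inferInstance, one_mul,
    ← IsFractionRing.finrank_eq (integralClosure O F') F' (integralClosure O K) K] at key

end Compositum

variable (O F Ω : Type*)
  [CommRing O] [IsDomain O] [IsDiscreteValuationRing O]
  [Field F] [Field Ω]
  [Algebra O F] [IsFractionRing O F]
  [Algebra F Ω] [Algebra O Ω] [IsScalarTower O F Ω]

theorem totally_ramified_unramified_linearly_disjoint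
    (E : IntermediateField F Ω) [FiniteDimensional F E] [Algebra.IsSeparable F E]
    (F' : IntermediateField F Ω) [FiniteDimensional F F'] [Algebra.IsSeparable F F']
    (htotE : (∃! Q : Ideal (integralClosure O E), Q.IsMaximal) ∧
      ∀ Q : Ideal (integralClosure O E), Q.IsMaximal →
        Ideal.ramificationIdx' (maximalIdeal O) Q
          = Module.finrank F E)
    (hunrF' : ∀ Q' : Ideal (integralClosure O F'), Q'.IsMaximal →
      Ideal.ramificationIdx' (maximalIdeal O) Q' = 1) :
    Module.finrank F' (IntermediateField.extendScalars (le_sup_right : F' ≤ E ⊔ F'))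
      = Module.finrank F E := by
  open IntermediateField in
  let : Algebra E ↥(E ⊔ F') := (inclusion le_sup_left).toAlgebra
  let : Algebra F' ↥(E ⊔ F') := (inclusion le_sup_right).toAlgebra
  have : IsScalarTower F E ↥(E ⊔ F') := .of_algHom _
  have : IsScalarTower F F' ↥(E ⊔ F') := .of_algHom _
  have hF' : 0 < finrank F F' := Module.finrank_pos
  have hcompositum : finrank F F' * finrank F' (extendScalars (le_sup_right : F' ≤ E ⊔ F')) =
      finrank F ↥(E ⊔ F') := by
    rw [← relfinrank_eq_finrank_of_le, finrank_bot_mul_relfinrank le_sup_right]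
  have hrank :
      finrank F' ↥(E ⊔ F') = finrank F' (extendScalars (le_sup_right : F' ≤ E ⊔ F')) :=
    Nat.eq_of_mul_eq_mul_left hF' ((Module.finrank_mul_finrank F F' _).trans hcompositum.symm)
  refine le_antisymm (Nat.le_of_mul_le_mul_left ?_ hF') ?_
  · rw [hcompositum, mul_comm]
    exact finrank_sup_le E F'
  · rw [← hrank]
    exact finrank_le_finrank_of_totally_ramified_of_unramified O F htotE.2 hunrF'
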